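/- arXiv:2603.17376 — 6 statements merged into one kernel-verified Lean document; each statement's English description precedes it below -/
import Mathlib

section
/- Let A be a real n×m matrix, D a real m×m diagonal matrix with strictly positive diagonal entries, and C a real m×q matrix each of whose columns lies in the kernel of A (i.e., AC = 0). Suppose θ ∈ ℝⁿ satisfies |(Aᵀθ)_e| ≤ π/2 for every index e ∈ {1,…,m}, and define f = D·sin(Aᵀθ) (sin applied componentwise). Then (i) |f_e| ≤ D_ee for every e ∈ {1,…,m}, and (ii) Cᵀ·arcsin(D⁻¹f) = 0 (arcsin applied componentwise). -/
open Matrix Real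

/-- The 'only if' direction of Proposition 1: a lossless power flow
solution `θ` with all edge angle differences at most `π/2` induces a line flow
`f = D·sin(Aᵀθ)` that is edge-wise feasible and cycle-consistent with respect to
any matrix `C` whose columns lie in `ker A`. -/
theorem stmt0 {n m q : ℕ}
    (A : Matrix (Fin n) (Fin m) ℝ)
    (d : Fin m → ℝ) (hd : ∀ e, 0 < d e)
    (D : Matrix (Fin m) (Fin m) ℝ) (hD : D = Matrix.diagonal d)
    (C : Matrix (Fin m) (Fin q) ℝ) (hC : A * C = 0)
    (θ : Fin n → ℝ) (hθ : ∀ e, |Aᵀ.mulVec θ e| ≤ π / 2)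
    (f : Fin m → ℝ)
    (hf : f = D.mulVec (fun e => Real.sin (Aᵀ.mulVec θ e))) :
    (∀ e, |f e| ≤ D e e) ∧
      Cᵀ.mulVec (fun e => Real.arcsin ((D⁻¹).mulVec f e)) = 0 := by
  subst hD hf
  have hDinv : (Matrix.diagonal d)⁻¹ = Matrix.diagonal (fun e => (d e)⁻¹) := by
    apply Matrix.inv_eq_right_inv
    rw [Matrix.diagonal_mul_diagonal]
    simp [funext fun e => mul_inv_cancel₀ (hd e).ne']
  have hkey : (fun e => Real.arcsin (((Matrix.diagonal d)⁻¹).mulVec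
      ((Matrix.diagonal d).mulVec (fun e => Real.sin (Aᵀ.mulVec θ e))) e)) = Aᵀ.mulVec θ := by
    funext e
    rw [hDinv, Matrix.mulVec_diagonal, Matrix.mulVec_diagonal,
      inv_mul_cancel_left₀ (hd e).ne']
    exact Real.arcsin_sin (neg_le_of_abs_le (hθ e)) (le_of_abs_le (hθ e))
  constructor
  · intro e
    rw [Matrix.mulVec_diagonal, Matrix.diagonal_apply_eq, abs_mul,
      abs_of_pos (hd e)]
    nth_rewrite 2 [← mul_one (d e)]
    exact mul_le_mul_of_nonneg_left (Real.abs_sin_le_one _) (hd e).le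
  · rw [hkey, Matrix.mulVec_mulVec, ← Matrix.transpose_mul, hC, Matrix.transpose_zero,
      Matrix.zero_mulVec]
end

section
/- Let A be a real n×m matrix, D a real m×m diagonal matrix with strictly positive diagonal entries, and C a real m×q matrix such that the kernel of the linear map x ↦ Cᵀx (from ℝᵐ to ℝ^q) is contained in the image of the linear map θ ↦ Aᵀθ (from ℝⁿ to ℝᵐ). Suppose f ∈ ℝᵐ satisfies |f_e| ≤ D_ee for every e ∈ {1,…,m} and Cᵀ·arcsin(D⁻¹f) = 0. Then there exists θ ∈ ℝⁿ such that f = D·sin(Aᵀθ) and |(Aᵀθ)_e| ≤ π/2 for every e ∈ {1,…,m}. -/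
open Matrix Real

/-- The 'if' direction of Proposition 1: edge-wise feasibility and
cycle consistency of a line flow vector `f` guarantee that `f` is realized by phase
angles `θ` with all edge angle differences at most `π/2` in absolute value. -/
theorem stmt1 {n m q : ℕ}
    (A : Matrix (Fin n) (Fin m) ℝ)
    (d : Fin m → ℝ) (hd : ∀ e, 0 < d e)
    (D : Matrix (Fin m) (Fin m) ℝ) (hD : D = Matrix.diagonal d)
    (C : Matrix (Fin m) (Fin q) ℝ)
    (hker : LinearMap.ker (Cᵀ.mulVecLin) ≤ LinearMap.range (Aᵀ.mulVecLin))
    (f : Fin m → ℝ)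
    (hfe : ∀ e, |f e| ≤ D e e)
    (hcc : Cᵀ.mulVec (fun e => Real.arcsin ((D⁻¹).mulVec f e)) = 0) :
    ∃ θ : Fin n → ℝ,
      f = D.mulVec (fun e => Real.sin (Aᵀ.mulVec θ e)) ∧
      ∀ e, |Aᵀ.mulVec θ e| ≤ π / 2 := by
  subst hD
  have hinv : (Matrix.diagonal d)⁻¹ = Matrix.diagonal (d⁻¹) := by
    apply Matrix.inv_eq_left_inv
    rw [Matrix.diagonal_mul_diagonal]
    convert Matrix.diagonal_one
    exact inv_mul_cancel₀ (hd _).ne'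
  set g : Fin m → ℝ := fun e => Real.arcsin ((Matrix.diagonal d)⁻¹.mulVec f e) with hg
  have hgval : ∀ e, g e = Real.arcsin (f e / d e) := by
    intro e
    show Real.arcsin ((Matrix.diagonal d)⁻¹.mulVec f e) = _
    rw [hinv, Matrix.mulVec_diagonal, div_eq_inv_mul, Pi.inv_apply]
  have hmem : g ∈ LinearMap.ker (Cᵀ.mulVecLin) := LinearMap.mem_ker.mpr hcc
  obtain ⟨θ, hθ⟩ := hker hmem
  refine ⟨θ, ?_, ?_⟩
  · funext e
    have he : Aᵀ.mulVec θ e = g e := by rw [← hθ]; rfl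
    have hle : |f e / d e| ≤ 1 := by
      rw [abs_div, abs_of_pos (hd e), div_le_one (hd e)]
      simpa using hfe e
    have : Real.sin (g e) = f e / d e := by
      rw [hgval e, Real.sin_arcsin (by linarith [abs_le.mp hle |>.1]) (abs_le.mp hle |>.2)]
    rw [Matrix.mulVec_diagonal, he, this]
    field_simp [(hd e).ne']
  · intro e
    have he : Aᵀ.mulVec θ e = g e := by rw [← hθ]; rfl
    rw [he, hgval e, abs_le]
    exact ⟨Real.neg_pi_div_two_le_arcsin _, Real.arcsin_le_pi_div_two _⟩
end

section
/- Let A be a real n×m matrix, D a real m×m diagonal matrix with strictly positive diagonal entries, and C a real m×q matrix whose column space equals the kernel of A (as subspaces of ℝᵐ). For f ∈ ℝᵐ, the following are equivalent: (a) there exists θ ∈ ℝⁿ with f = D·sin(Aᵀθ) and |(Aᵀθ)_e| ≤ π/2 for every e ∈ {1,…,m}; (b) |f_e| ≤ D_ee for every e ∈ {1,…,m} and Cᵀ·arcsin(D⁻¹f) = 0. -/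
open Matrix Real

/-- Proposition 1: a line flow vector `f` corresponds to a lossless
power flow solution with all edge angle differences bounded by `π/2` if and only if
`f` is edge-wise feasible and cycle-consistent with respect to a cycle basis matrix
`C` (a matrix whose column space equals `ker A`). -/
theorem stmt2 {n m q : ℕ}
    (A : Matrix (Fin n) (Fin m) ℝ)
    (d : Fin m → ℝ) (hd : ∀ e, 0 < d e)
    (D : Matrix (Fin m) (Fin m) ℝ) (hD : D = Matrix.diagonal d)
    (C : Matrix (Fin m) (Fin q) ℝ)
    (hC : LinearMap.range (C.mulVecLin) = LinearMap.ker (A.mulVecLin))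
    (f : Fin m → ℝ) :
    (∃ θ : Fin n → ℝ,
        f = D.mulVec (fun e => Real.sin (Aᵀ.mulVec θ e)) ∧
        ∀ e, |Aᵀ.mulVec θ e| ≤ π / 2) ↔
    ((∀ e, |f e| ≤ D e e) ∧
      Cᵀ.mulVec (fun e => Real.arcsin ((D⁻¹).mulVec f e)) = 0) := by
  subst hD
  have hDinv : (Matrix.diagonal d)⁻¹ = Matrix.diagonal (fun e => (d e)⁻¹) := by
    apply Matrix.inv_eq_right_inv
    rw [Matrix.diagonal_mul_diagonal]
    convert Matrix.diagonal_one using 2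
    funext e
    exact mul_inv_cancel₀ (hd e).ne'
  -- A * C = 0
  have hAC : A * C = 0 := by
    ext i j
    have h1 : (A * C).mulVec (Pi.single j 1) = 0 := by
      rw [← Matrix.mulVec_mulVec]
      have : C.mulVec (Pi.single j 1) ∈ LinearMap.ker A.mulVecLin := by
        rw [← hC]; exact ⟨Pi.single j 1, rfl⟩
      simpa using this
    have := congrFun h1 i
    simpa [Matrix.mulVec_single] using this
  -- ker Cᵀ = range Aᵀ
  have hkr : LinearMap.ker (Cᵀ.mulVecLin) = LinearMap.range (Aᵀ.mulVecLin) := by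
    symm
    apply Submodule.eq_of_le_of_finrank_eq
    · rintro x ⟨θ, rfl⟩
      show Cᵀ.mulVec (Aᵀ.mulVec θ) = 0
      rw [Matrix.mulVec_mulVec, ← Matrix.transpose_mul, hAC]
      simp
    · have h1 := LinearMap.finrank_range_add_finrank_ker (Cᵀ.mulVecLin)
      have h2 := LinearMap.finrank_range_add_finrank_ker (A.mulVecLin)
      have hrC : (Cᵀ).rank = C.rank := Matrix.rank_transpose C
      have hrA : (Aᵀ).rank = A.rank := Matrix.rank_transpose A
      have hCk : C.rank = Module.finrank ℝ (LinearMap.ker (A.mulVecLin)) := by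
        rw [Matrix.rank, hC]
      simp only [Matrix.rank] at hrC hrA hCk
      simp only [Module.finrank_pi, Fintype.card_fin] at h1 h2 ⊢
      omega
  constructor
  · rintro ⟨θ, rfl, hbd⟩
    have hval : ∀ e, (Matrix.diagonal d).mulVec
        (fun e => Real.sin (Aᵀ.mulVec θ e)) e = d e * Real.sin (Aᵀ.mulVec θ e) := by
      intro e; rw [Matrix.mulVec_diagonal]
    constructor
    · intro e
      rw [hval, Matrix.diagonal_apply_eq, abs_mul, abs_of_pos (hd e)]
      calc d e * |Real.sin (Aᵀ.mulVec θ e)| ≤ d e * 1 := by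
            exact mul_le_mul_of_nonneg_left (abs_sin_le_one _) (hd e).le
        _ = d e := mul_one _
    · have harg : (fun e => Real.arcsin ((Matrix.diagonal d)⁻¹.mulVec
          ((Matrix.diagonal d).mulVec (fun e => Real.sin (Aᵀ.mulVec θ e))) e))
          = Aᵀ.mulVec θ := by
        funext e
        rw [hDinv, Matrix.mulVec_diagonal, hval, inv_mul_cancel_left₀ (hd e).ne']
        have := abs_le.mp (hbd e)
        exact Real.arcsin_sin this.1 this.2
      rw [harg]
      show Cᵀ.mulVec (Aᵀ.mulVec θ) = 0
      rw [Matrix.mulVec_mulVec, ← Matrix.transpose_mul, hAC]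
      simp
  · rintro ⟨hfe, hcyc⟩
    have hfe' : ∀ e, |f e| ≤ d e := fun e => by
      simpa [Matrix.diagonal_apply_eq] using hfe e
    set x : Fin m → ℝ := fun e => Real.arcsin ((Matrix.diagonal d)⁻¹.mulVec f e) with hx
    have hxmem : x ∈ LinearMap.range (Aᵀ.mulVecLin) := by
      rw [← hkr]; exact hcyc
    obtain ⟨θ, hθ⟩ := hxmem
    refine ⟨θ, ?_, ?_⟩
    · funext e
      have hθe : Aᵀ.mulVec θ e = x e := congrFun hθ e
      rw [Matrix.mulVec_diagonal, hθe, hx]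
      simp only [hDinv, Matrix.mulVec_diagonal]
      have hb : |(d e)⁻¹ * f e| ≤ 1 := by
        rw [abs_mul, abs_of_pos (inv_pos.mpr (hd e))]
        calc (d e)⁻¹ * |f e| ≤ (d e)⁻¹ * d e :=
              mul_le_mul_of_nonneg_left (hfe' e) (inv_pos.mpr (hd e)).le
          _ = 1 := inv_mul_cancel₀ (hd e).ne'
      have := abs_le.mp hb
      rw [Real.sin_arcsin this.1 this.2, mul_inv_cancel_left₀ (hd e).ne']
    · intro e
      have hθe : Aᵀ.mulVec θ e = x e := congrFun hθ e
      rw [hθe, hx]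
      exact abs_le.mpr ⟨Real.neg_pi_div_two_le_arcsin _, Real.arcsin_le_pi_div_two _⟩
end

section
/- Let A be a real n×m matrix such that the kernel of the linear map θ ↦ Aᵀθ (from ℝⁿ to ℝᵐ) equals the span of the all-ones vector 𝟙 ∈ ℝⁿ. Let D be a real m×m diagonal matrix with strictly positive diagonal entries. Suppose θ₁, θ₂ ∈ ℝⁿ satisfy D·sin(Aᵀθ₁) = D·sin(Aᵀθ₂), with |(Aᵀθ₁)_e| ≤ π/2 and |(Aᵀθ₂)_e| ≤ π/2 for every e ∈ {1,…,m}. Then there exists a real constant c such that θ₁ − θ₂ = c·𝟙. -/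
open Matrix Real

/-- Uniqueness up to an additive constant: if `ker(Aᵀ)` is the span of
the all-ones vector and `D·sin(Aᵀθ₁) = D·sin(Aᵀθ₂)` with all edge angle differences
bounded by `π/2`, then `θ₁ − θ₂` is a constant multiple of the all-ones vector. -/
theorem stmt4 {n m : ℕ}
    (A : Matrix (Fin n) (Fin m) ℝ)
    (hker : LinearMap.ker (Aᵀ.mulVecLin) =
      Submodule.span ℝ {(fun _ => (1 : ℝ) : Fin n → ℝ)})
    (d : Fin m → ℝ) (hd : ∀ e, 0 < d e)
    (D : Matrix (Fin m) (Fin m) ℝ) (hD : D = Matrix.diagonal d)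
    (θ₁ θ₂ : Fin n → ℝ)
    (heq : D.mulVec (fun e => Real.sin (Aᵀ.mulVec θ₁ e)) =
           D.mulVec (fun e => Real.sin (Aᵀ.mulVec θ₂ e)))
    (h₁ : ∀ e, |Aᵀ.mulVec θ₁ e| ≤ π / 2)
    (h₂ : ∀ e, |Aᵀ.mulVec θ₂ e| ≤ π / 2) :
    ∃ c : ℝ, θ₁ - θ₂ = c • (fun _ : Fin n => (1 : ℝ)) := by
  subst hD
  have hsin : ∀ e, Real.sin (Aᵀ.mulVec θ₁ e) = Real.sin (Aᵀ.mulVec θ₂ e) := by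
    intro e
    have := congrFun heq e
    simp [Matrix.mulVec_diagonal] at this
    rcases this with h | h
    · exact h
    · exact absurd h (hd e).ne'
  have hAT : Aᵀ.mulVec θ₁ = Aᵀ.mulVec θ₂ := by
    funext e
    have m1 : Aᵀ.mulVec θ₁ e ∈ Set.Icc (-(π/2)) (π/2) := abs_le.mp (h₁ e)
    have m2 : Aᵀ.mulVec θ₂ e ∈ Set.Icc (-(π/2)) (π/2) := abs_le.mp (h₂ e)
    exact Real.injOn_sin m1 m2 (hsin e)
  have hmem : θ₁ - θ₂ ∈ LinearMap.ker (Aᵀ.mulVecLin) := by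
    rw [LinearMap.mem_ker, map_sub, Matrix.mulVecLin_apply, Matrix.mulVecLin_apply, hAT, sub_self]
  rw [hker, Submodule.mem_span_singleton] at hmem
  obtain ⟨c, hc⟩ := hmem
  exact ⟨c, hc.symm⟩
end

section
/- Let A be a real n×m matrix, D a real m×m diagonal matrix with strictly positive diagonal entries, P ∈ ℝⁿ, and f̂ ∈ ℝᵐ with A·f̂ = P. Let C be a real m×q matrix with AC = 0 and such that the kernel of x ↦ Cᵀx (from ℝᵐ to ℝ^q) is contained in the image of θ ↦ Aᵀθ. Set z₀ = D⁻¹f̂, H = D⁻¹C, z(λ) = z₀ + Hλ, and g(λ) = Cᵀ·arcsin(z(λ)) for λ ∈ ℝ^q. Let λ̲, λ̄ ∈ ℝ^q with λ̲ ≤ λ̄ componentwise, and let Λ = {λ ∈ ℝ^q : λ̲ ≤ λ ≤ λ̄ componentwise}. Assume: (1) |z_e(λ)| ≤ 1 for every e ∈ {1,…,m} and every λ ∈ Λ; (2) for all λ, μ ∈ Λ with λ ≤ μ componentwise, g(λ) ≤ g(μ) componentwise; (3) for every i ∈ {1,…,q}, g_i evaluated at the point whose i-th coordinate is λ̲_i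 and whose j-th coordinate is λ̄_j for all j ≠ i is ≤ 0, and g_i evaluated at the point whose i-th coordinate is λ̄_i and whose j-th coordinate is λ̲_j for all j ≠ i is ≥ 0. Then there exists θ ∈ ℝⁿ such that P = A·D·sin(Aᵀθ) and |(Aᵀθ)_e| ≤ π/2 for every e ∈ {1,…,m}. -/
/-!
The cycle residual `g` is the gradient of the energy `E λ = ∑ₑ dₑ F (zₑ λ)` with `F' = arcsin`
(Mathlib's `arcsin` is continuous on all of `ℝ`, so `E` is differentiable everywhere). Let `λ*`
minimize `E` over the compact box `Λ`. In a coordinate `i` where `λ*` is off the lower face,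
the first-order condition gives `gᵢ λ* ≤ 0`; on the lower face, `λ*` lies below the corner of
condition (3), so monotonicity gives `gᵢ λ* ≤ 0` as well. Symmetrically `0 ≤ gᵢ λ*`, so
`g λ* = 0`: `arcsin (z λ*) ∈ ker Cᵀ ⊆ range Aᵀ`, say `= Aᵀ θ`. Then `sin (Aᵀ θ) = z λ*` by (1),
and `A D z λ* = A f̂ + A C λ* = P`.
-/

open Matrix Real Set Function

lemma IsMinOn.hasFDerivWithinAt_apply_sub_nonneg {E : Type*} [NormedAddCommGroup E]
    [NormedSpace ℝ E] {f : E → ℝ} {f' : StrongDual ℝ E} {s : Set E} {a y : E}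
    (hmin : IsMinOn f s a) (hf : HasFDerivWithinAt f f' s a) (hs : Convex ℝ s)
    (ha : a ∈ s) (hy : y ∈ s) : 0 ≤ f' (y - a) :=
  hmin.localize.hasFDerivWithinAt_nonneg hf
    (sub_mem_posTangentConeAt_of_segment_subset (hs.segment_subset ha hy))

section DotProductCLM

variable {ι : Type*} [Fintype ι]

def dotProductCLM (w : ι → ℝ) : (ι → ℝ) →L[ℝ] ℝ := ∑ i, w i • ContinuousLinearMap.proj i

@[simp]
lemma dotProductCLM_apply (w v : ι → ℝ) : dotProductCLM w v = w ⬝ᵥ v := by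
  simp [dotProductCLM, dotProduct]

end DotProductCLM

section Box

variable {ι : Type*} [DecidableEq ι] {lo hi l : ι → ℝ} {i : ι}

lemma update_mem_Icc (hl : l ∈ Icc lo hi) {t : ℝ} (ht : t ∈ Icc (lo i) (hi i)) :
    update l i t ∈ Icc lo hi :=
  ⟨le_update_iff.2 ⟨ht.1, fun j _ => hl.1 j⟩, update_le_iff.2 ⟨ht.2, fun j _ => hl.2 j⟩⟩

variable [Fintype ι] {G : ι → ℝ}

lemma dotProduct_update_sub (t : ℝ) :
    G ⬝ᵥ (update l i t - l) = G i * (t - l i) := by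
  have : update l i t - l = Pi.single i (t - l i) := by
    ext j
    rcases eq_or_ne j i with rfl | hj <;> simp [*]
  rw [this, dotProduct_single]

lemma nonneg_of_forall_dotProduct_sub_nonneg (hl : l ∈ Icc lo hi)
    (hG : ∀ y ∈ Icc lo hi, 0 ≤ G ⬝ᵥ (y - l)) (hlt : l i < hi i) : 0 ≤ G i := by
  have := hG _ (update_mem_Icc hl ⟨(hl.1 i).trans hlt.le, le_rfl⟩)
  rw [dotProduct_update_sub] at this
  exact nonneg_of_mul_nonneg_left this (sub_pos.2 hlt)

lemma nonpos_of_forall_dotProduct_sub_nonneg (hl : l ∈ Icc lo hi)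
    (hG : ∀ y ∈ Icc lo hi, 0 ≤ G ⬝ᵥ (y - l)) (hlt : lo i < l i) : G i ≤ 0 := by
  have := hG _ (update_mem_Icc hl ⟨le_rfl, hlt.le.trans (hl.2 i)⟩)
  rw [dotProduct_update_sub] at this
  exact nonpos_of_mul_nonneg_left this (sub_neg.2 hlt)

theorem exists_mem_Icc_eq_zero_of_monotoneOn_of_hasFDerivWithinAt {E : (ι → ℝ) → ℝ}
    {G : (ι → ℝ) → ι → ℝ} (hle : lo ≤ hi)
    (hE : ∀ l ∈ Icc lo hi, HasFDerivWithinAt E (dotProductCLM (G l)) (Icc lo hi) l)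
    (hG : MonotoneOn G (Icc lo hi)) (hlo : ∀ i, G (update hi i (lo i)) i ≤ 0)
    (hhi : ∀ i, 0 ≤ G (update lo i (hi i)) i) :
    ∃ l ∈ Icc lo hi, G l = 0 := by
  obtain ⟨l, hl, hmin⟩ := isCompact_Icc.exists_isMinOn (nonempty_Icc.2 hle)
    fun l hl => (hE l hl).continuousWithinAt
  have hvi : ∀ y ∈ Icc lo hi, 0 ≤ G l ⬝ᵥ (y - l) := fun y hy => by
    simpa using hmin.hasFDerivWithinAt_apply_sub_nonneg (hE l hl) (convex_Icc lo hi) hl hy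
  refine ⟨l, hl, funext fun i => le_antisymm ?_ ?_⟩
  · rcases (hl.1 i).eq_or_lt with heq | hlt
    · have hcorner : update hi i (lo i) ∈ Icc lo hi :=
        update_mem_Icc ⟨hle, le_rfl⟩ ⟨le_rfl, hle i⟩
      exact (hG hl hcorner (le_update_iff.2 ⟨heq.ge, fun j _ => hl.2 j⟩) i).trans (hlo i)
    · exact nonpos_of_forall_dotProduct_sub_nonneg hl hvi hlt
  · rcases (hl.2 i).eq_or_lt with heq | hlt
    · have hcorner : update lo i (hi i) ∈ Icc lo hi :=
        update_mem_Icc ⟨le_rfl, hle⟩ ⟨hle i, le_rfl⟩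
      exact (hhi i).trans (hG hcorner hl (update_le_iff.2 ⟨heq.ge, fun j _ => hl.1 j⟩) i)
    · exact nonneg_of_forall_dotProduct_sub_nonneg hl hvi hlt

end Box

noncomputable def arcsinPrim (x : ℝ) : ℝ := ∫ s in (0 : ℝ)..x, arcsin s

lemma hasDerivAt_arcsinPrim (x : ℝ) : HasDerivAt arcsinPrim (arcsin x) x :=
  (continuous_arcsin.integral_hasStrictDerivAt 0 x).hasDerivAt

lemma hasFDerivAt_sum_mul_comp_affine {m q : Type*} [Fintype m] [DecidableEq m] [Fintype q]
    {φ φ' : ℝ → ℝ} (hφ : ∀ x, HasDerivAt φ (φ' x) x) (d z0 : m → ℝ) (H : Matrix m q ℝ)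
    (l : q → ℝ) :
    HasFDerivAt (fun μ => ∑ e, d e * φ ((z0 + H *ᵥ μ) e))
      (dotProductCLM (Hᵀ *ᵥ (diagonal d *ᵥ fun e => φ' ((z0 + H *ᵥ l) e)))) l := by
  have hrow (e : m) : HasFDerivAt (fun μ => (z0 + H *ᵥ μ) e) (dotProductCLM fun j => H e j) l :=
    ((dotProductCLM fun j => H e j).hasFDerivAt.const_add (z0 e)).congr_of_eventuallyEq
      (.of_forall fun μ => by simp [mulVec])
  refine (HasFDerivAt.fun_sum fun e _ =>
    ((hφ _).comp_hasFDerivAt l (hrow e)).const_mul (d e)).congr_fderiv ?_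
  ext v
  simp only [FunLike.coe_sum, Finset.sum_apply, FunLike.coe_smul, Pi.smul_apply,
    dotProductCLM_apply, smul_eq_mul]
  rw [mulVec_transpose, ← dotProduct_mulVec]
  exact Finset.sum_congr rfl fun e _ => by rw [mulVec_diagonal, mulVec]; ring

/-- Theorem 1 (Sufficient Condition for Solvability): under edge-wise
feasibility of the cycle-parameterized normalized line flows over the box `Λ`,
coordinatewise monotonicity of the cycle consistency residual `g`, and sign
conditions at opposite corner points of the box, the lossless real power flow
equation `P = A·D·sin(Aᵀθ)` admits a solution with all edge angle differences
bounded by `π/2`. -/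
theorem stmt5 {n m q : ℕ}
    (A : Matrix (Fin n) (Fin m) ℝ)
    (d : Fin m → ℝ) (hd : ∀ e, 0 < d e)
    (D : Matrix (Fin m) (Fin m) ℝ) (hD : D = Matrix.diagonal d)
    (P : Fin n → ℝ) (fhat : Fin m → ℝ) (hfhat : A.mulVec fhat = P)
    (C : Matrix (Fin m) (Fin q) ℝ) (hAC : A * C = 0)
    (hker : LinearMap.ker (Cᵀ.mulVecLin) ≤ LinearMap.range (Aᵀ.mulVecLin))
    (z0 : Fin m → ℝ) (hz0 : z0 = (D⁻¹).mulVec fhat)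
    (H : Matrix (Fin m) (Fin q) ℝ) (hH : H = D⁻¹ * C)
    (z : (Fin q → ℝ) → Fin m → ℝ) (hz : ∀ lam, z lam = z0 + H.mulVec lam)
    (g : (Fin q → ℝ) → Fin q → ℝ)
    (hg : ∀ lam, g lam = Cᵀ.mulVec (fun e => Real.arcsin (z lam e)))
    (lamL lamU : Fin q → ℝ) (hle : lamL ≤ lamU)
    (Lam : Set (Fin q → ℝ)) (hLam : Lam = {lam | lamL ≤ lam ∧ lam ≤ lamU})
    (h1 : ∀ lam ∈ Lam, ∀ e, |z lam e| ≤ 1)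
    (h2 : ∀ lam ∈ Lam, ∀ mu ∈ Lam, lam ≤ mu → g lam ≤ g mu)
    (h3 : ∀ i : Fin q,
      g (fun j => if j = i then lamL i else lamU j) i ≤ 0 ∧
      0 ≤ g (fun j => if j = i then lamU i else lamL j) i) :
    ∃ θ : Fin n → ℝ,
      P = A.mulVec (D.mulVec (fun e => Real.sin (Aᵀ.mulVec θ e))) ∧
      ∀ e, |Aᵀ.mulVec θ e| ≤ π / 2 := by
  subst hD hLam
  have hdet : IsUnit (diagonal d).det := by
    rw [det_diagonal]
    exact isUnit_iff_ne_zero.2 (Finset.prod_ne_zero_iff.2 fun e _ => (hd e).ne')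
  have hDH : diagonal d * H = C := by
    rw [hH, ← Matrix.mul_assoc, mul_nonsing_inv _ hdet, Matrix.one_mul]
  have hDz0 : diagonal d *ᵥ z0 = fhat := by
    rw [hz0, mulVec_mulVec, mul_nonsing_inv _ hdet, one_mulVec]
  obtain rfl : z = fun lam => z0 + H *ᵥ lam := funext hz
  have hgrad (lam : Fin q → ℝ) :
      HasFDerivAt (fun μ => ∑ e, d e * arcsinPrim ((z0 + H *ᵥ μ) e))
        (dotProductCLM (g lam)) lam := by
    rw [hg, ← hDH, transpose_mul, diagonal_transpose, ← mulVec_mulVec]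
    exact hasFDerivAt_sum_mul_comp_affine hasDerivAt_arcsinPrim d z0 H lam
  obtain ⟨l, hl, hgl⟩ := exists_mem_Icc_eq_zero_of_monotoneOn_of_hasFDerivWithinAt hle
    (fun l _ => (hgrad l).hasFDerivWithinAt) h2
    (fun i => (congrArg (g · i) (funext (update_apply lamU i (lamL i)))).trans_le (h3 i).1)
    (fun i => (h3 i).2.trans_eq (congrArg (g · i) (funext (update_apply lamL i (lamU i)))).symm)
  obtain ⟨θ, hθ⟩ := hker (LinearMap.mem_ker.2 ((hg l).symm.trans hgl))
  have hθe (e : Fin m) : (Aᵀ *ᵥ θ) e = arcsin ((z0 + H *ᵥ l) e) := congrFun hθ e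
  have hsin : (fun e => sin ((Aᵀ *ᵥ θ) e)) = z0 + H *ᵥ l :=
    funext fun e => by rw [hθe]; exact sin_arcsin' (abs_le.1 (h1 l hl e))
  refine ⟨θ, ?_, fun e => ?_⟩
  · rw [hsin, mulVec_add, hDz0, mulVec_mulVec, hDH, mulVec_add, hfhat, mulVec_mulVec, hAC,
      zero_mulVec, add_zero]
  · rw [hθe, abs_le]
    exact ⟨neg_pi_div_two_le_arcsin _, arcsin_le_pi_div_two _⟩
end

section
/- Let A be a real n×m matrix, D a real m×m diagonal matrix with strictly positive diagonal entries, P ∈ ℝⁿ, f̂ ∈ ℝᵐ with A·f̂ = P, and C a real m×q matrix with A·C = 0. Suppose λ* ∈ ℝ^q is such that the vector f* = f̂ + C·λ* satisfies |f*_e| ≤ D_ee for every e ∈ {1,…,m} and Cᵀ·arcsin(D⁻¹f*) = 0, and suppose the kernel of x ↦ Cᵀx (from ℝᵐ to ℝ^q) is contained in the image of θ ↦ Aᵀθ. Then there exists θ ∈ ℝⁿ such that P = A·D·sin(Aᵀθ) and |(Aᵀθ)_e| ≤ π/2 for every e ∈ {1,…,m}. -/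
open Matrix Real

/-- Final step in the proof of Theorem 1: a zero `λ*` of the cycle
consistency residual yields a line flow `f* = f̂ + Cλ*` that satisfies the nodal
balance `A·f* = P` (since `AC = 0`) together with edge-wise feasibility and cycle
consistency, and hence corresponds to a solution of the lossless real power flow
equation. -/
theorem stmt15 {n m q : ℕ}
    (A : Matrix (Fin n) (Fin m) ℝ)
    (d : Fin m → ℝ) (hd : ∀ e, 0 < d e)
    (D : Matrix (Fin m) (Fin m) ℝ) (hD : D = Matrix.diagonal d)
    (P : Fin n → ℝ) (fhat : Fin m → ℝ) (hfhat : A.mulVec fhat = P)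
    (C : Matrix (Fin m) (Fin q) ℝ) (hAC : A * C = 0)
    (lamStar : Fin q → ℝ)
    (fStar : Fin m → ℝ) (hfStar : fStar = fhat + C.mulVec lamStar)
    (hfe : ∀ e, |fStar e| ≤ D e e)
    (hcc : Cᵀ.mulVec (fun e => Real.arcsin ((D⁻¹).mulVec fStar e)) = 0)
    (hker : LinearMap.ker (Cᵀ.mulVecLin) ≤ LinearMap.range (Aᵀ.mulVecLin)) :
    ∃ θ : Fin n → ℝ,
      P = A.mulVec (D.mulVec (fun e => Real.sin (Aᵀ.mulVec θ e))) ∧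
      ∀ e, |Aᵀ.mulVec θ e| ≤ π / 2 := by
  classical
  set x : Fin m → ℝ := fun e => Real.arcsin ((D⁻¹).mulVec fStar e) with hx
  have hxker : x ∈ LinearMap.ker (Cᵀ.mulVecLin) := by
    rw [LinearMap.mem_ker, Matrix.mulVecLin_apply]; exact hcc
  obtain ⟨θ, hθ⟩ := hker hxker
  rw [Matrix.mulVecLin_apply] at hθ
  have hDinv : D⁻¹ = Matrix.diagonal (fun e => (d e)⁻¹) := by
    apply Matrix.inv_eq_right_inv
    rw [hD, Matrix.diagonal_mul_diagonal]
    convert Matrix.diagonal_one using 2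
    exact funext fun e => mul_inv_cancel₀ (hd e).ne'
  have hinv : (D⁻¹).mulVec fStar = fun e => (d e)⁻¹ * fStar e := by
    funext e
    simp [hDinv, Matrix.mulVec_diagonal]
  have habs : ∀ e, |(d e)⁻¹ * fStar e| ≤ 1 := by
    intro e
    rw [abs_mul, abs_of_pos (inv_pos.mpr (hd e))]
    have := hfe e
    rw [hD, Matrix.diagonal_apply_eq] at this
    calc (d e)⁻¹ * |fStar e| ≤ (d e)⁻¹ * d e := by
          exact mul_le_mul_of_nonneg_left this (le_of_lt (inv_pos.mpr (hd e)))
      _ = 1 := inv_mul_cancel₀ (hd e).ne'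
  have hsin : ∀ e, Real.sin (x e) = (d e)⁻¹ * fStar e := by
    intro e
    have hxe : x e = Real.arcsin ((d e)⁻¹ * fStar e) := by rw [hx]; simp [hinv]
    rw [hxe, Real.sin_arcsin ((abs_le.mp (habs e)).1) ((abs_le.mp (habs e)).2)]
  have hDsin : D.mulVec (fun e => Real.sin (Aᵀ.mulVec θ e)) = fStar := by
    funext e
    rw [hθ, hD, Matrix.mulVec_diagonal, hsin e, ← mul_assoc,
      mul_inv_cancel₀ (hd e).ne', one_mul]
  refine ⟨θ, ?_, ?_⟩
  · rw [hDsin, hfStar, Matrix.mulVec_add, hfhat, Matrix.mulVec_mulVec, hAC,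
      Matrix.zero_mulVec, add_zero]
  · intro e
    rw [hθ, abs_le]
    exact ⟨Real.neg_pi_div_two_le_arcsin _, Real.arcsin_le_pi_div_two _⟩
end
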